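/- arXiv:1606.09081 — 2 statements merged into one kernel-verified Lean document; each statement's English description precedes it below -/
import Mathlib

section
/- If A is an n×n skew-symmetric matrix and X is an HL-clan of A, then det(Inv(X,A)) = det(A). -/
open Matrix

def MInv {m : Type*} [DecidableEq m] (X : Finset m) (A : Matrix m m ℝ) : Matrix m m ℝ :=
  fun i j => if i ∈ X ∧ j ∈ X then -A i j else A i j

def oSub {m : Type*} (A : Matrix m m ℝ) (X Y : Finset m) : Matrix X Y ℝ :=
  A.submatrix (fun i => (i : m)) (fun j => (j : m))

def pSub {m : Type*} (A : Matrix m m ℝ) (X : Finset m) : Matrix X X ℝ :=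
  A.submatrix (fun i => (i : m)) (fun j => (j : m))

def IsHLClan {m : Type*} [Fintype m] [DecidableEq m] (A : Matrix m m ℝ) (X : Finset m) : Prop :=
  (oSub A X Xᶜ).rank ≤ 1 ∧ (oSub A Xᶜ X).rank ≤ 1

def HLCRE {m : Type*} [Fintype m] [DecidableEq m] (A B : Matrix m m ℝ) : Prop :=
  ∃ N : ℕ, ∃ f : ℕ → Matrix m m ℝ, f 0 = A ∧ f N = B ∧
    (∀ k ≤ N, (f k)ᵀ = -(f k)) ∧
    (∀ k < N, ∃ X : Finset m, IsHLClan (f k) X ∧ f (k + 1) = MInv X (f k))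

/-!
Split `A` into blocks along `X ⊔ Xᶜ`. The clan condition gives `A[X, Xᶜ] = u vᵀ`, and then
skew-symmetry gives `A[Xᶜ, X] = -v uᵀ`. For rank-one corners of this shape
`det A = det P * det Q + (uᵀ adj(P) u) * (vᵀ adj(Q) v)`, where `P = A[X, X]` and `Q = A[Xᶜ, Xᶜ]`;
this comes from the Schur complement when `P` and `Q` are invertible, and in general by density.
`Inv(X, A)` only replaces the skew block `P` by `-P`. If `|X|` is even, `det (-P) = det P` and
`adj P` is skew, so its quadratic form vanishes; if `|X|` is odd, `det P = 0` and `adj (-P) = adj P`.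
-/

namespace Matrix

section RankOne

variable {α β K : Type*} [Fintype α] [Fintype β] [Field K]

theorem exists_eq_vecMulVec_of_rank_le_one {M : Matrix α β K} (h : M.rank ≤ 1) :
    ∃ (u : α → K) (v : β → K), M = vecMulVec u v := by
  rw [rank_eq_finrank_span_cols] at h
  obtain ⟨u, hu⟩ := finrank_le_one_iff.mp h
  choose v hv using fun j => hu ⟨M.col j, Submodule.subset_span ⟨j, rfl⟩⟩
  refine ⟨u, v, ext fun i j => ?_⟩
  have hij := congrFun (congrArg Subtype.val (hv j)) i
  simp only [SetLike.val_smul, Pi.smul_apply, smul_eq_mul, col_apply] at hij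
  rw [vecMulVec_apply, ← hij, mul_comm]

end RankOne

section Skew

variable {m R : Type*} [Fintype m] [CommRing R] {S : Matrix m m R}

theorem dotProduct_mulVec_self_eq_zero_of_transpose_eq_neg [NoZeroDivisors R] [CharZero R]
    (hS : Sᵀ = -S) (u : m → R) : u ⬝ᵥ S *ᵥ u = 0 := by
  rw [← CharZero.eq_neg_self_iff]
  nth_rw 1 [dotProduct_mulVec, ← mulVec_transpose, hS, neg_mulVec, neg_dotProduct,
    dotProduct_comm]

theorem det_eq_zero_of_transpose_eq_neg_of_odd [DecidableEq m] [NoZeroDivisors R] [CharZero R]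
    (hS : Sᵀ = -S) (hm : Odd (Fintype.card m)) : S.det = 0 := by
  rw [← CharZero.eq_neg_self_iff]
  nth_rw 1 [← det_transpose, hS, det_neg, hm.neg_one_pow, neg_one_mul]

theorem adjugate_transpose_eq_neg_of_even [DecidableEq m] (hS : Sᵀ = -S)
    (hm : Even (Fintype.card m)) (hm0 : Fintype.card m ≠ 0) : (adjugate S)ᵀ = -adjugate S := by
  rw [adjugate_transpose, hS, ← neg_one_smul R S, adjugate_smul,
    (Nat.Even.sub_odd (Nat.one_le_iff_ne_zero.2 hm0) hm odd_one).neg_one_pow, neg_one_smul]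

theorem dotProduct_adjugate_mulVec_self_eq_zero_of_even [DecidableEq m] [NoZeroDivisors R]
    [CharZero R] (hS : Sᵀ = -S) (hm : Even (Fintype.card m)) (u : m → R) :
    u ⬝ᵥ adjugate S *ᵥ u = 0 := by
  rcases eq_or_ne (Fintype.card m) 0 with hm0 | hm0
  · have := Fintype.card_eq_zero_iff.1 hm0
    simp [dotProduct]
  · exact dotProduct_mulVec_self_eq_zero_of_transpose_eq_neg
      (adjugate_transpose_eq_neg_of_even hS hm hm0) u

end Skew

section RankOneBlocks

variable {m n : Type*} [Fintype m] [DecidableEq m] [Fintype n] [DecidableEq n]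

theorem det_mul_dotProduct_inv_mulVec {R : Type*} [CommRing R] {P : Matrix m m R}
    (hP : IsUnit P.det) (a d : m → R) :
    P.det * (d ⬝ᵥ P⁻¹ *ᵥ a) = d ⬝ᵥ adjugate P *ᵥ a := by
  rw [nonsing_inv_apply _ hP, smul_mulVec, dotProduct_smul, smul_eq_mul, ← mul_assoc,
    IsUnit.mul_val_inv, one_mul]

theorem det_add_vecMulVec_of_isUnit {R : Type*} [CommRing R] {Q : Matrix n n R}
    (hQ : IsUnit Q.det) (x y : n → R) :
    (Q + vecMulVec x y).det = Q.det + y ⬝ᵥ adjugate Q *ᵥ x := by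
  rw [vecMulVec_eq Unit, det_add_replicateCol_mul_replicateRow hQ, Matrix.mul_assoc,
    ← replicateCol_mulVec, det_unique (1 + _ : Matrix Unit Unit R), Matrix.add_apply,
    one_apply_eq, replicateRow_mul_replicateCol_apply, mul_add, mul_one,
    det_mul_dotProduct_inv_mulVec hQ]

theorem det_fromBlocks_vecMulVec_of_isUnit {R : Type*} [CommRing R] {P : Matrix m m R}
    {Q : Matrix n n R} (hP : IsUnit P.det) (hQ : IsUnit Q.det) (a d : m → R) (b c : n → R) :
    (fromBlocks P (vecMulVec a b) (vecMulVec c d) Q).det =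
      P.det * Q.det - (d ⬝ᵥ adjugate P *ᵥ a) * (b ⬝ᵥ adjugate Q *ᵥ c) := by
  let := invertibleOfIsUnitDet P hP
  have hschur : vecMulVec c d * ⅟P * vecMulVec a b = vecMulVec c ((d ⬝ᵥ P⁻¹ *ᵥ a) • b) := by
    rw [invOf_eq_nonsing_inv, vecMulVec_mul, vecMulVec_mul_vecMulVec, dotProduct_mulVec]
  rw [det_fromBlocks₁₁, hschur, sub_eq_add_neg, ← vecMulVec_neg, det_add_vecMulVec_of_isUnit hQ,
    neg_dotProduct, smul_dotProduct, smul_eq_mul, ← det_mul_dotProduct_inv_mulVec hP]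
  ring

theorem finite_setOf_det_add_smul_one_eq_zero {K : Type*} [Field K] (P : Matrix m m K) :
    {t : K | (P + t • 1).det = 0}.Finite := by
  have heval : ∀ t : K, (P + t • 1).det = (-P).charpoly.eval t := by
    intro t
    rw [eval_charpoly, scalar_apply, sub_neg_eq_add, add_comm, smul_one_eq_diagonal]
  simp only [heval]
  exact Polynomial.finite_setOfPred_isRoot (charpoly_monic (-P)).ne_zero

theorem det_fromBlocks_vecMulVec {𝕜 : Type*} [NontriviallyNormedField 𝕜] [CompleteSpace 𝕜]
    (P : Matrix m m 𝕜) (Q : Matrix n n 𝕜) (a d : m → 𝕜) (b c : n → 𝕜) :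
    (fromBlocks P (vecMulVec a b) (vecMulVec c d) Q).det =
      P.det * Q.det - (d ⬝ᵥ adjugate P *ᵥ a) * (b ⬝ᵥ adjugate Q *ᵥ c) := by
  have hdense : Dense ({t : 𝕜 | (P + t • 1).det = 0} ∪ {t | (Q + t • 1).det = 0})ᶜ :=
    ((finite_setOf_det_add_smul_one_eq_zero P).union
      (finite_setOf_det_add_smul_one_eq_zero Q)).countable.dense_compl 𝕜
  have key := Continuous.ext_on hdense
    (f := fun t => (fromBlocks (P + t • 1) (vecMulVec a b) (vecMulVec c d) (Q + t • 1)).det)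
    (g := fun t => (P + t • 1).det * (Q + t • 1).det -
      (d ⬝ᵥ adjugate (P + t • 1) *ᵥ a) * (b ⬝ᵥ adjugate (Q + t • 1) *ᵥ c))
    (by fun_prop) (by fun_prop) fun t ht => by
      rw [Set.mem_compl_iff, Set.mem_union, not_or] at ht
      exact det_fromBlocks_vecMulVec_of_isUnit (isUnit_iff_ne_zero.2 ht.1)
        (isUnit_iff_ne_zero.2 ht.2) a d b c
  simpa using congrFun key 0

theorem det_fromBlocks_neg_vecMulVec_of_transpose_eq_neg {𝕜 : Type*}
    [NontriviallyNormedField 𝕜] [CompleteSpace 𝕜] [CharZero 𝕜] {P : Matrix m m 𝕜}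
    (hP : Pᵀ = -P) (Q : Matrix n n 𝕜) (u : m → 𝕜) (b c : n → 𝕜) :
    (fromBlocks (-P) (vecMulVec u b) (vecMulVec c u) Q).det =
      (fromBlocks P (vecMulVec u b) (vecMulVec c u) Q).det := by
  rw [det_fromBlocks_vecMulVec, det_fromBlocks_vecMulVec, det_neg, ← neg_one_smul 𝕜 P,
    adjugate_smul, smul_mulVec, dotProduct_smul, smul_eq_mul]
  rcases Nat.even_or_odd (Fintype.card m) with hm | hm
  · rw [dotProduct_adjugate_mulVec_self_eq_zero_of_even hP hm, hm.neg_one_pow]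
    ring
  · rw [det_eq_zero_of_transpose_eq_neg_of_odd hP hm, (Nat.Odd.sub_odd hm odd_one).neg_one_pow]
    ring

end RankOneBlocks

end Matrix

section Clan

theorem oSub_transpose_of_transpose_eq_neg {m : Type*} {A : Matrix m m ℝ} (hA : Aᵀ = -A)
    (X Y : Finset m) : (oSub A X Y)ᵀ = -oSub A Y X := by
  rw [oSub, transpose_submatrix, hA]
  rfl

theorem pSub_transpose_of_transpose_eq_neg {m : Type*} {A : Matrix m m ℝ} (hA : Aᵀ = -A)
    (X : Finset m) : (pSub A X)ᵀ = -pSub A X :=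
  oSub_transpose_of_transpose_eq_neg hA X X

variable {m : Type*} [Fintype m] [DecidableEq m]

def Finset.sumComplEquiv (X : Finset m) : X ⊕ (Xᶜ : Finset m) ≃ m :=
  (Equiv.sumCongr (Equiv.refl X) (Equiv.subtypeEquivRight fun _ => Finset.mem_compl)).trans
    (Equiv.sumCompl (· ∈ X))

theorem submatrix_sumComplEquiv_eq_fromBlocks (A : Matrix m m ℝ) (X : Finset m) :
    A.submatrix X.sumComplEquiv X.sumComplEquiv =
      fromBlocks (pSub A X) (oSub A X Xᶜ) (oSub A Xᶜ X) (pSub A Xᶜ) := by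
  ext (i | i) (j | j) <;> rfl

theorem MInv_submatrix_sumComplEquiv_eq_fromBlocks (A : Matrix m m ℝ) (X : Finset m) :
    (MInv X A).submatrix X.sumComplEquiv X.sumComplEquiv =
      fromBlocks (-pSub A X) (oSub A X Xᶜ) (oSub A Xᶜ X) (pSub A Xᶜ) := by
  ext (i | i) (j | j)
  · simp [MInv, pSub, Finset.sumComplEquiv, i.2, j.2]
  · simp [MInv, oSub, Finset.sumComplEquiv, Finset.mem_compl.1 j.2]
  · simp [MInv, oSub, Finset.sumComplEquiv, Finset.mem_compl.1 i.2]
  · simp [MInv, pSub, Finset.sumComplEquiv, Finset.mem_compl.1 i.2]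

end Clan

theorem stmt_6 {n : ℕ} (A : Matrix (Fin n) (Fin n) ℝ) (hA : Aᵀ = -A)
    (X : Finset (Fin n)) (hX : IsHLClan A X) :
    (MInv X A).det = A.det := by
  obtain ⟨u, v, huv⟩ := exists_eq_vecMulVec_of_rank_le_one hX.1
  have hvu : oSub A Xᶜ X = vecMulVec (-v) u := by
    rw [← neg_neg (oSub A Xᶜ X), ← oSub_transpose_of_transpose_eq_neg hA, huv,
      transpose_vecMulVec, neg_vecMulVec]
  rw [← det_submatrix_equiv_self X.sumComplEquiv, ← det_submatrix_equiv_self X.sumComplEquiv A,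
    MInv_submatrix_sumComplEquiv_eq_fromBlocks, submatrix_sumComplEquiv_eq_fromBlocks, huv, hvu]
  exact det_fromBlocks_neg_vecMulVec_of_transpose_eq_neg
    (pSub_transpose_of_transpose_eq_neg hA X) _ u v (-v)
end

section
/- If A and B are n×n skew-symmetric matrices that are HL-clan-reversal-equivalent, then A and B have equal corresponding principal minors of all orders. -/
open Matrix

/-!
Write `M` in blocks `[[P, Q], [-Qᵀ, R]]` along `X ⊔ Xᶜ`, so that `MInv X M = [[-P, Q], [-Qᵀ, R]]`
and `Q` has rank at most one. If `Q = 0`, then `MInv X M` is `M` with the rows of `X` negated,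
and when `|X|` is odd both determinants vanish because `P` is skew-symmetric of odd size.
Otherwise a congruence by a unimodular matrix that is block diagonal along `X`, hence commutes
with `MInv X`, reduces `Q` to a single entry `c = M i₀ j₀`. Expanding along rows `i₀` and `j₀`
gives `det M = det B - c² det A`, with `B` the matrix `M` without the entry `c` and
`A = pivotRows M i₀ j₀`; for `MInv X M` the same expansion negates `|X|` rows of `B` and
`|X| - 1` rows of `A`. By skew-symmetry `det B = 0` when `|X|` is odd and `det A = 0` when `|X|`
is even, so the two expansions agree. Principal submatrices inherit all the hypotheses, so every
principal minor is preserved along a chain of clan reversals.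
-/

variable {m : Type*} [Fintype m] [DecidableEq m]

omit [Fintype m] [DecidableEq m] in
theorem skew_apply {M : Matrix m m ℝ} (hM : Mᵀ = -M) (i j : m) : M j i = -M i j := by
  simpa using congrFun (congrFun hM i) j

omit [DecidableEq m] in
theorem transpose_mul_mul_transpose_of_skew {M : Matrix m m ℝ} (hM : Mᵀ = -M)
    (G : Matrix m m ℝ) : (G * M * Gᵀ)ᵀ = -(G * M * Gᵀ) := by
  rw [transpose_mul, transpose_mul, transpose_transpose, hM, Matrix.neg_mul, Matrix.mul_neg,
    Matrix.mul_assoc]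

theorem Matrix.det_eq_zero_of_transpose_eq_neg {n R : Type*} [Fintype n] [DecidableEq n]
    [CommRing R] [NoZeroDivisors R] [CharZero R] {A : Matrix n n R} (hA : Aᵀ = -A)
    (hodd : Odd (Fintype.card n)) : A.det = 0 := by
  have h : A.det = -A.det := by
    conv_lhs => rw [← det_transpose, hA, det_neg, hodd.neg_one_pow, neg_one_mul]
  exact self_eq_neg.mp h

theorem det_eq_zero_of_lower_zero_of_det_pSub {C : Matrix m m ℝ} (S : Finset m)
    (hzero : ∀ i ∉ S, ∀ j ∈ S, C i j = 0) (hS : (pSub C S).det = 0) : C.det = 0 := by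
  rw [twoBlockTriangular_det C (· ∈ S) hzero]
  convert zero_mul _
  convert hS
  rfl

theorem det_eq_zero_of_skew_odd_block {C : Matrix m m ℝ} (S : Finset m)
    (hzero : ∀ i ∉ S, ∀ j ∈ S, C i j = 0) (hskew : ∀ i ∈ S, ∀ j ∈ S, C j i = -C i j)
    (hodd : Odd S.card) : C.det = 0 := by
  refine det_eq_zero_of_lower_zero_of_det_pSub S hzero
    (det_eq_zero_of_transpose_eq_neg ?_ (by rwa [Fintype.card_coe]))
  ext ⟨i, hi⟩ ⟨j, hj⟩
  exact hskew i hi j hj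

def signDiag (S : Finset m) : Matrix m m ℝ := diagonal fun i => if i ∈ S then -1 else 1

theorem det_signDiag (S : Finset m) : (signDiag S).det = (-1) ^ S.card := by
  rw [signDiag, det_diagonal, Finset.prod_ite, Finset.prod_const_one, mul_one, Finset.prod_const,
    Finset.filter_mem_eq_inter, Finset.univ_inter]

theorem signDiag_mul_apply (S : Finset m) (C : Matrix m m ℝ) (i j : m) :
    (signDiag S * C) i j = if i ∈ S then -C i j else C i j := by
  simp only [signDiag, diagonal_mul]
  split_ifs <;> simp

def blockProj (X : Finset m) : Matrix m m ℝ := diagonal fun i => if i ∈ X then 1 else 0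

theorem MInv_eq_sub (X : Finset m) (A : Matrix m m ℝ) :
    MInv X A = A - 2 • (blockProj X * A * blockProj X) := by
  ext i j
  by_cases hi : i ∈ X <;> by_cases hj : j ∈ X <;>
    simp [MInv, blockProj, diagonal_mul, mul_diagonal, hi, hj, two_mul]

theorem mul_MInv_mul_transpose {G : Matrix m m ℝ} {X : Finset m} (hG : Commute G (blockProj X))
    (A : Matrix m m ℝ) : G * MInv X A * Gᵀ = MInv X (G * A * Gᵀ) := by
  have hGt : blockProj X * Gᵀ = Gᵀ * blockProj X := by
    simpa [blockProj, transpose_mul] using congrArg transpose hG.eq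
  simp only [MInv_eq_sub, Matrix.mul_sub, Matrix.sub_mul, Matrix.mul_smul, Matrix.smul_mul,
    Matrix.mul_assoc, hGt]
  simp only [← Matrix.mul_assoc, hG.eq]

def rowElim (d : m → ℝ) (k : m) : Matrix m m ℝ := 1 - vecMulVec d (Pi.single k 1)

theorem det_rowElim {d : m → ℝ} {k : m} (hd : d k = 0) : (rowElim d k).det = 1 := by
  rw [rowElim, sub_eq_add_neg, ← neg_vecMulVec, vecMulVec_eq Unit,
    det_one_add_replicateCol_mul_replicateRow, single_one_dotProduct, Pi.neg_apply, hd,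
    neg_zero, add_zero]

theorem rowElim_mul_mul_transpose_apply (d : m → ℝ) (k : m) (M : Matrix m m ℝ) (i j : m) :
    (rowElim d k * M * (rowElim d k)ᵀ) i j
      = M i j - d i * M k j - M i k * d j + d i * d j * M k k := by
  simp only [rowElim, Matrix.sub_mul, Matrix.one_mul, transpose_sub, transpose_one,
    Matrix.mul_sub, Matrix.mul_one, transpose_vecMulVec, vecMulVec_mul, mul_vecMulVec,
    Matrix.sub_apply, vecMulVec_apply, single_one_vecMul, mulVec_single_one, row_apply, col_apply]
  ring

theorem commute_rowElim_blockProj {d : m → ℝ} {k : m} {X : Finset m}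
    (hd : ∀ i, d i ≠ 0 → (i ∈ X ↔ k ∈ X)) : Commute (rowElim d k) (blockProj X) := by
  ext i j
  simp only [rowElim, blockProj, diagonal_mul, mul_diagonal, Matrix.sub_apply, vecMulVec_apply,
    Pi.single_apply, one_apply]
  by_cases hdi : d i = 0
  · split_ifs <;> simp_all
  · have := hd i hdi
    split_ifs <;> simp_all

def pivotRows (C : Matrix m m ℝ) (i₀ j₀ : m) : Matrix m m ℝ :=
  updateRow (updateRow C i₀ (Pi.single j₀ 1)) j₀ (Pi.single i₀ 1)

omit [Fintype m] in
theorem eq_update_add_smul_single (v : m → ℝ) (j : m) :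
    v = Function.update v j 0 + v j • Pi.single j 1 := by
  ext k
  by_cases hk : k = j <;> simp [hk]

theorem det_eq_add_of_lower_single {C : Matrix m m ℝ} {X : Finset m} {i₀ j₀ : m}
    (hi₀ : i₀ ∈ X) (hj₀ : j₀ ∉ X) (hlow : ∀ i ∉ X, ∀ j ∈ X, i ≠ j₀ ∨ j ≠ i₀ → C i j = 0) :
    C.det = (updateRow C i₀ (Function.update (C i₀) j₀ 0)).det
      + C i₀ j₀ * C j₀ i₀ * (pivotRows C i₀ j₀).det := by
  have hne : j₀ ≠ i₀ := fun h => hj₀ (h ▸ hi₀)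
  have hvanish : (updateRow (updateRow C i₀ (Pi.single j₀ 1)) j₀
      (Function.update (C j₀) i₀ 0)).det = 0 := by
    refine det_eq_zero_of_lower_zero_of_det_pSub X (fun i hi j hj => ?_)
      (det_eq_zero_of_row_eq_zero ⟨i₀, hi₀⟩ fun ⟨j, hj⟩ => ?_)
    · by_cases hij : i = j₀
      · subst hij
        by_cases hji : j = i₀
        · simp [hji]
        · rw [updateRow_self, Function.update_of_ne hji]
          exact hlow i hi j hj (Or.inr hji)
      · have hii₀ : i ≠ i₀ := fun h => hi (h ▸ hi₀)
        rw [updateRow_ne hij, updateRow_ne hii₀]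
        exact hlow i hi j hj (Or.inl hij)
    · have hj' : j ≠ j₀ := fun h => hj₀ (h ▸ hj)
      simp [pSub, updateRow_ne hne.symm, hj']
  calc C.det
      = (updateRow C i₀ (Function.update (C i₀) j₀ 0 + C i₀ j₀ • Pi.single j₀ 1)).det := by
        rw [← eq_update_add_smul_single, updateRow_eq_self]
    _ = (updateRow C i₀ (Function.update (C i₀) j₀ 0)).det
          + C i₀ j₀ * (updateRow C i₀ (Pi.single j₀ 1)).det := by
        rw [det_updateRow_add, det_updateRow_smul]
    _ = (updateRow C i₀ (Function.update (C i₀) j₀ 0)).det + C i₀ j₀ *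
          (updateRow (updateRow C i₀ (Pi.single j₀ 1)) j₀
            (Function.update (C j₀) i₀ 0 + C j₀ i₀ • Pi.single i₀ 1)).det := by
        rw [← eq_update_add_smul_single, ← updateRow_ne (M := C) (b := Pi.single j₀ 1) hne,
          updateRow_eq_self]
    _ = _ := by
        rw [det_updateRow_add, det_updateRow_smul, hvanish, pivotRows]
        ring

theorem det_MInv_of_cross_eq_zero {M : Matrix m m ℝ} {X : Finset m} (hM : Mᵀ = -M)
    (hcross : ∀ i ∈ X, ∀ j ∉ X, M i j = 0) : (MInv X M).det = M.det := by
  have hMInv : MInv X M = signDiag X * M := by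
    ext i j
    rw [signDiag_mul_apply]
    by_cases hi : i ∈ X
    · by_cases hj : j ∈ X
      · simp [MInv, hi, hj]
      · simp [MInv, hi, hj, hcross i hi j hj]
    · simp [MInv, hi]
  rw [hMInv, det_mul, det_signDiag]
  rcases Nat.even_or_odd X.card with he | ho
  · rw [he.neg_one_pow, one_mul]
  · have hlow : ∀ i ∉ X, ∀ j ∈ X, M i j = 0 := fun i hi j hj => by
      rw [skew_apply hM, hcross j hj i hi, neg_zero]
    rw [det_eq_zero_of_skew_odd_block X hlow (fun i _ j _ => skew_apply hM i j) ho, mul_zero]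

section SingleCross

variable {M : Matrix m m ℝ} {X : Finset m} {i₀ j₀ : m}

theorem updateRow_MInv_eq_signDiag_mul (hi₀ : i₀ ∈ X)
    (hcross : ∀ i ∈ X, ∀ j ∉ X, i ≠ i₀ ∨ j ≠ j₀ → M i j = 0) :
    updateRow (MInv X M) i₀ (Function.update (MInv X M i₀) j₀ 0)
      = signDiag X * updateRow M i₀ (Function.update (M i₀) j₀ 0) := by
  ext i j
  rw [signDiag_mul_apply]
  by_cases hi : i = i₀
  · subst hi
    by_cases hj : j = j₀
    · simp [hj, hi₀]
    · by_cases hjX : j ∈ X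
      · simp [hj, hi₀, MInv, hjX]
      · simp [hj, hi₀, MInv, hjX, hcross i hi₀ j hjX (Or.inr hj)]
  · by_cases hiX : i ∈ X
    · by_cases hjX : j ∈ X
      · simp [hi, MInv, hiX, hjX]
      · simp [hi, MInv, hiX, hjX, hcross i hiX j hjX (Or.inl hi)]
    · simp [hi, MInv, hiX]

theorem pivotRows_MInv_eq_signDiag_mul (hi₀ : i₀ ∈ X) (hj₀ : j₀ ∉ X)
    (hcross : ∀ i ∈ X, ∀ j ∉ X, i ≠ i₀ ∨ j ≠ j₀ → M i j = 0) :
    pivotRows (MInv X M) i₀ j₀ = signDiag (X.erase i₀) * pivotRows M i₀ j₀ := by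
  have hne : i₀ ≠ j₀ := fun h => hj₀ (h ▸ hi₀)
  ext i j
  rw [signDiag_mul_apply]
  by_cases hi : i = i₀
  · subst hi; simp [pivotRows, hne]
  by_cases hi' : i = j₀
  · subst hi'; simp [pivotRows, hj₀]
  by_cases hiX : i ∈ X
  · by_cases hjX : j ∈ X
    · simp [pivotRows, hi, hi', MInv, hiX, hjX]
    · simp [pivotRows, hi, hi', MInv, hiX, hjX, hcross i hiX j hjX (Or.inl hi)]
  · simp [pivotRows, hi, hi', MInv, hiX]

theorem det_pivotRows_eq_zero (hM : Mᵀ = -M) (hi₀ : i₀ ∈ X) (hj₀ : j₀ ∉ X)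
    (hcross : ∀ i ∈ X, ∀ j ∉ X, i ≠ i₀ ∨ j ≠ j₀ → M i j = 0) (he : Even X.card) :
    (pivotRows M i₀ j₀).det = 0 := by
  have hne : i₀ ≠ j₀ := fun h => hj₀ (h ▸ hi₀)
  refine det_eq_zero_of_skew_odd_block (X.erase i₀) (fun i hi j hj => ?_) (fun i hi j hj => ?_) ?_
  · obtain ⟨hji₀, hjX⟩ := Finset.mem_erase.mp hj
    by_cases hi' : i = j₀
    · simp [pivotRows, hi', hji₀]
    by_cases hii₀ : i = i₀
    · have hjj₀ : j ≠ j₀ := fun h => hj₀ (h ▸ hjX)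
      simp [pivotRows, hii₀, updateRow_ne hne, hjj₀]
    have hiX : i ∉ X := fun h => hi (Finset.mem_erase.mpr ⟨hii₀, h⟩)
    have hMij : M i j = 0 := by
      rw [← neg_eq_zero, ← skew_apply hM, hcross j hjX i hiX (Or.inl hji₀)]
    simpa [pivotRows, hi', hii₀] using hMij
  · obtain ⟨hii₀, hiX⟩ := Finset.mem_erase.mp hi
    obtain ⟨hji₀, hjX⟩ := Finset.mem_erase.mp hj
    have hij₀ : i ≠ j₀ := fun h => hj₀ (h ▸ hiX)
    have hjj₀ : j ≠ j₀ := fun h => hj₀ (h ▸ hjX)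
    simp [pivotRows, hii₀, hji₀, hij₀, hjj₀, skew_apply hM i j]
  · rw [Finset.card_erase_of_mem hi₀]
    exact Nat.Even.sub_odd (Finset.card_pos.mpr ⟨i₀, hi₀⟩) he odd_one

theorem det_updateRow_update_eq_zero (hM : Mᵀ = -M) (hj₀ : j₀ ∉ X)
    (hcross : ∀ i ∈ X, ∀ j ∉ X, i ≠ i₀ ∨ j ≠ j₀ → M i j = 0) (ho : Odd X.card) :
    (updateRow M i₀ (Function.update (M i₀) j₀ 0)).det = 0 := by
  set B := updateRow M i₀ (Function.update (M i₀) j₀ 0)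
  have hBM : ∀ a b, b ≠ j₀ → B a b = M a b := fun a b hb => by
    by_cases ha : a = i₀ <;> simp [B, ha, hb]
  rw [← det_transpose]
  refine det_eq_zero_of_skew_odd_block X (fun i hi j hj => ?_) (fun i hi j hj => ?_) ho
  · by_cases hji₀ : j = i₀
    · subst hji₀
      by_cases hij : i = j₀
      · simp [B, hij]
      · simpa [B, hij] using hcross j hj i hi (Or.inr hij)
    · simpa [B, hji₀] using hcross j hj i hi (Or.inl hji₀)
  · have hij₀ : i ≠ j₀ := fun h => hj₀ (h ▸ hi)
    have hjj₀ : j ≠ j₀ := fun h => hj₀ (h ▸ hj)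
    rw [transpose_apply, transpose_apply, hBM _ _ hjj₀, hBM _ _ hij₀, skew_apply hM]

theorem det_MInv_of_single_cross (hM : Mᵀ = -M) (hi₀ : i₀ ∈ X) (hj₀ : j₀ ∉ X)
    (hcross : ∀ i ∈ X, ∀ j ∉ X, i ≠ i₀ ∨ j ≠ j₀ → M i j = 0) : (MInv X M).det = M.det := by
  have hlow : ∀ i ∉ X, ∀ j ∈ X, i ≠ j₀ ∨ j ≠ i₀ → M i j = 0 := fun i hi j hj h => by
    rw [← neg_eq_zero, ← skew_apply hM, hcross j hj i hi h.symm]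
  have hlow' : ∀ i ∉ X, ∀ j ∈ X, i ≠ j₀ ∨ j ≠ i₀ → MInv X M i j = 0 := fun i hi j hj h => by
    simpa [MInv, hi] using hlow i hi j hj h
  have hc : MInv X M i₀ j₀ * MInv X M j₀ i₀ = M i₀ j₀ * M j₀ i₀ := by simp [MInv, hj₀]
  rw [det_eq_add_of_lower_single hi₀ hj₀ hlow, det_eq_add_of_lower_single hi₀ hj₀ hlow',
    updateRow_MInv_eq_signDiag_mul hi₀ hcross,
    pivotRows_MInv_eq_signDiag_mul hi₀ hj₀ hcross, hc, det_mul, det_mul, det_signDiag,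
    det_signDiag, Finset.card_erase_of_mem hi₀]
  rcases Nat.even_or_odd X.card with he | ho
  · rw [det_pivotRows_eq_zero hM hi₀ hj₀ hcross he, he.neg_one_pow]
    ring
  · rw [det_updateRow_update_eq_zero hM hj₀ hcross ho, (Nat.Odd.sub_odd ho odd_one).neg_one_pow]
    ring

end SingleCross

/-- `E₁` clears the cross entries of the rows `X \ {i₀}` against row `i₀` (exactly, because the
cross block has rank one); `E₂` then clears those of row `i₀` outside column `j₀` against row
`j₀`. -/
theorem exists_congr_single_cross {M : Matrix m m ℝ} {X : Finset m} {i₀ j₀ : m} (hM : Mᵀ = -M)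
    (hrank : ∀ i ∈ X, ∀ i' ∈ X, ∀ j ∉ X, ∀ j' ∉ X, M i j * M i' j' = M i j' * M i' j)
    (hi₀ : i₀ ∈ X) (hj₀ : j₀ ∉ X) (hc : M i₀ j₀ ≠ 0) :
    ∃ G : Matrix m m ℝ, G.det = 1 ∧ Commute G (blockProj X) ∧
      ∀ i ∈ X, ∀ j ∉ X, i ≠ i₀ ∨ j ≠ j₀ → (G * M * Gᵀ) i j = 0 := by
  have hsk := skew_apply hM
  have hdiag : ∀ i, M i i = 0 := fun i => by linarith [hsk i i]
  set d₁ : m → ℝ := fun i => if i ∈ X ∧ i ≠ i₀ then M i j₀ / M i₀ j₀ else 0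
  set d₂ : m → ℝ := fun j => if j ∉ X ∧ j ≠ j₀ then M j i₀ / M j₀ i₀ else 0
  set E₁ := rowElim d₁ i₀
  set E₂ := rowElim d₂ j₀
  have hd₁ : ∀ i, d₁ i ≠ 0 → (i ∈ X ↔ i₀ ∈ X) := fun i hi =>
    iff_of_true (by_contra fun h => hi (by simp [d₁, h])) hi₀
  have hd₂ : ∀ j, d₂ j ≠ 0 → (j ∈ X ↔ j₀ ∈ X) := fun j hj =>
    iff_of_false (fun h => hj (by simp [d₂, h])) hj₀
  refine ⟨E₂ * E₁, ?_, (commute_rowElim_blockProj hd₂).mul_left (commute_rowElim_blockProj hd₁),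
    fun i hi j hj hij => ?_⟩
  · rw [det_mul, det_rowElim (by simp [d₂]), det_rowElim (by simp [d₁]), one_mul]
  rw [show E₂ * E₁ * M * (E₂ * E₁)ᵀ = E₂ * (E₁ * M * E₁ᵀ) * E₂ᵀ by
    simp only [transpose_mul, Matrix.mul_assoc]]
  have hd₂i : d₂ i = 0 := by simp [d₂, hi]
  have hd₁j : d₁ j = 0 := by simp [d₁, hj]
  have hd₁j₀ : d₁ j₀ = 0 := by simp [d₁, hj₀]
  simp only [rowElim_mul_mul_transpose_apply, E₁, E₂, hd₂i, hd₁j, hd₁j₀, hdiag]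
  by_cases hii₀ : i = i₀
  · have hjj₀ : j ≠ j₀ := by tauto
    have hd₁i : d₁ i = 0 := by simp [d₁, hii₀]
    have hd₂j : d₂ j = M i₀ j / M i₀ j₀ := by
      simp only [d₂, if_pos (And.intro hj hjj₀), hsk i₀ j, hsk i₀ j₀, neg_div_neg_eq]
    rw [hd₁i, hd₂j, hii₀]
    field_simp
    ring
  · have hd₁i : d₁ i = M i j₀ / M i₀ j₀ := if_pos ⟨hi, hii₀⟩
    rw [hd₁i]
    field_simp
    linear_combination hrank i hi i₀ hi₀ j hj j₀ hj₀

theorem det_MInv_of_skew {M : Matrix m m ℝ} {X : Finset m} (hM : Mᵀ = -M)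
    (hrank : ∀ i ∈ X, ∀ i' ∈ X, ∀ j ∉ X, ∀ j' ∉ X, M i j * M i' j' = M i j' * M i' j) :
    (MInv X M).det = M.det := by
  by_cases h₀ : ∀ i ∈ X, ∀ j ∉ X, M i j = 0
  · exact det_MInv_of_cross_eq_zero hM h₀
  push Not at h₀
  obtain ⟨i₀, hi₀, j₀, hj₀, hc⟩ := h₀
  obtain ⟨G, hG, hcomm, hcross⟩ := exists_congr_single_cross hM hrank hi₀ hj₀ hc
  have h := det_MInv_of_single_cross (transpose_mul_mul_transpose_of_skew hM G) hi₀ hj₀ hcross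
  simpa only [← mul_MInv_mul_transpose hcomm, det_mul, det_transpose, hG, one_mul, mul_one]
    using h

theorem Matrix.mul_eq_mul_of_rank_le_one {α β K : Type*} [Fintype β] [Field K]
    {A : Matrix α β K} (hA : A.rank ≤ 1) (i i' : α) (j j' : β) :
    A i j * A i' j' = A i j' * A i' j := by
  by_contra hne
  have hunit : IsUnit (A.submatrix ![i, i'] ![j, j']) := by
    rw [isUnit_iff_isUnit_det, det_fin_two, isUnit_iff_ne_zero]
    simpa [sub_eq_zero] using hne
  have := rank_submatrix_le A ![i, i'] ![j, j']
  rw [rank_of_isUnit _ hunit, Fintype.card_fin] at this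
  omega

theorem IsHLClan.mul_eq_mul {M : Matrix m m ℝ} {X : Finset m} (hX : IsHLClan M X) :
    ∀ i ∈ X, ∀ i' ∈ X, ∀ j ∉ X, ∀ j' ∉ X, M i j * M i' j' = M i j' * M i' j :=
  fun i hi i' hi' j hj j' hj' => mul_eq_mul_of_rank_le_one hX.1 ⟨i, hi⟩ ⟨i', hi'⟩
    ⟨j, Finset.mem_compl.mpr hj⟩ ⟨j', Finset.mem_compl.mpr hj'⟩

omit [Fintype m] in
theorem pSub_MInv (X Y : Finset m) (A : Matrix m m ℝ) :
    pSub (MInv X A) Y = MInv (X.subtype (· ∈ Y)) (pSub A Y) := by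
  ext i j
  simp [pSub, MInv]

theorem det_pSub_MInv_of_isHLClan {M : Matrix m m ℝ} {X : Finset m} (hM : Mᵀ = -M)
    (hX : IsHLClan M X) (Y : Finset m) : (pSub (MInv X M) Y).det = (pSub M Y).det := by
  rw [pSub_MInv]
  refine det_MInv_of_skew ?_ fun i hi i' hi' j hj j' hj' => ?_
  · ext i j
    simpa [pSub] using congrFun (congrFun hM i) j
  · simp only [Finset.mem_subtype] at hi hi' hj hj'
    exact hX.mul_eq_mul i hi i' hi' j hj j' hj'

theorem stmt_14_general {n : ℕ} (A B : Matrix (Fin n) (Fin n) ℝ)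
    (h : HLCRE A B) :
    ∀ Y : Finset (Fin n), (pSub A Y).det = (pSub B Y).det := by
  obtain ⟨N, f, rfl, rfl, hskew, hstep⟩ := h
  intro Y
  suffices ∀ k ≤ N, (pSub (f k) Y).det = (pSub (f 0) Y).det from (this N le_rfl).symm
  intro k
  induction k with
  | zero => intro; rfl
  | succ k ih =>
    intro hk
    obtain ⟨X, hX, hfk⟩ := hstep k hk
    rw [hfk, det_pSub_MInv_of_isHLClan (hskew k (Nat.le_of_succ_le hk)) hX,
      ih (Nat.le_of_succ_le hk)]

theorem stmt_14 {n : ℕ} (A B : Matrix (Fin n) (Fin n) ℝ) (hA : Aᵀ = -A) (hB : Bᵀ = -B)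
    (h : HLCRE A B) :
    ∀ Y : Finset (Fin n), (pSub A Y).det = (pSub B Y).det :=
  stmt_14_general A B h
end
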